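/- arXiv:2205.06665 — 2 statements merged into one kernel-verified Lean document; each statement's English description precedes it below -/
import Mathlib

section
/- For every KAM configuration C: C ->* <\x.t | []> for some x and t if and only if [[C]] has a weak barb on the coname b! with respect to the empty set of hidden names. -/
/-! ### HOcore: syntax, LTS, barbs, barbed bisimilarity -/

/-- Channel names of HOcore. -/
abbrev Name := ℕ

/-- HOcore processes, with de Bruijn indices for process variables. -/
inductive Proc : Type
  | nil : Proc
  | pvar : ℕ → Proc
  | par : Proc → Proc → Proc
  | inp : Name → Proc → Proc
  | out : Name → Proc → Proc
  deriving DecidableEq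

namespace Proc

/-- Shift the free de Bruijn indices `≥ k` by `d`. -/
def lift (d : ℕ) : ℕ → Proc → Proc
  | _, nil => nil
  | k, pvar n => if n < k then pvar n else pvar (n + d)
  | k, par P Q => par (lift d k P) (lift d k Q)
  | k, inp a P => inp a (lift d (k + 1) P)
  | k, out a P => out a (lift d k P)

/-- Capture-avoiding substitution of `S` for the de Bruijn index `k` in `P`. -/
def subst : Proc → ℕ → Proc → Proc
  | nil, _, _ => nil
  | pvar n, k, S => if n = k then lift k 0 S else if k < n then pvar (n - 1) else pvar n
  | par P Q, k, S => par (subst P k S) (subst Q k S)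
  | inp a P, k, S => inp a (subst P (k + 1) S)
  | out a P, k, S => out a (subst P k S)

/-- Free channel names of a process. -/
def fnames : Proc → Finset Name
  | nil => ∅
  | pvar _ => ∅
  | par P Q => fnames P ∪ fnames Q
  | inp a P => insert a (fnames P)
  | out a P => insert a (fnames P)

end Proc

/-- Labels of the HOcore LTS: internal step, output, input. -/
inductive Label
  | tau : Label
  | outl : Name → Proc → Label
  | inl : Name → Proc → Label

/-- Structural congruence: parallel composition is associative, commutative,
and has `nil` as a neutral element. -/
inductive SCong : Proc → Proc → Prop
  | refl (P) : SCong P P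
  | symm {P Q} : SCong P Q → SCong Q P
  | trans {P Q R} : SCong P Q → SCong Q R → SCong P R
  | parComm (P Q) : SCong (.par P Q) (.par Q P)
  | parAssoc (P Q R) : SCong (.par (.par P Q) R) (.par P (.par Q R))
  | parNil (P) : SCong (.par P .nil) P
  | parCong {P P' Q Q'} : SCong P P' → SCong Q Q' → SCong (.par P Q) (.par P' Q')
  | inpCong {P P'} (a) : SCong P P' → SCong (.inp a P) (.inp a P')
  | outCong {P P'} (a) : SCong P P' → SCong (.out a P) (.out a P')

/-- The labeled transition system of HOcore (processes are considered up to
structural congruence). -/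
inductive Step : Proc → Label → Proc → Prop
  | outS (a P) : Step (.out a P) (.outl a P) .nil
  | inpS (a Q P) : Step (.inp a Q) (.inl a P) (Q.subst 0 P)
  | parL {P l P'} (Q) : Step P l P' → Step (.par P Q) l (.par P' Q)
  | parR {Q l Q'} (P) : Step Q l Q' → Step (.par P Q) l (.par P Q')
  | comm1 {P Q P' Q' a R} : Step P (.outl a R) P' → Step Q (.inl a R) Q' →
      Step (.par P Q) .tau (.par P' Q')
  | comm2 {P Q P' Q' a R} : Step P (.inl a R) P' → Step Q (.outl a R) Q' →
      Step (.par P Q) .tau (.par P' Q')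
  | struct {P P' l Q Q'} : SCong P P' → Step P' l Q' → SCong Q' Q → Step P l Q

/-- One internal step. -/
def TauStep (P Q : Proc) : Prop := Step P Label.tau Q

/-- Weak internal transition `==tau==>`. -/
def WTau : Proc → Proc → Prop := Relation.ReflTransGen TauStep

/-- Observables: input on a name, or output on a name (a coname). -/
inductive Barb
  | inb : Name → Barb
  | outb : Name → Barb
  deriving DecidableEq

/-- Strong observable action w.r.t. a set `H` of hidden names. -/
def StrongBarb (H : Set Name) (P : Proc) : Barb → Prop
  | .inb a => a ∉ H ∧ ∃ Q R, Step P (Label.inl a Q) R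
  | .outb a => a ∉ H ∧ ∃ Q R, Step P (Label.outl a Q) R

/-- Weak observable action w.r.t. a set `H` of hidden names. -/
def WeakBarb (H : Set Name) (P : Proc) (α : Barb) : Prop :=
  ∃ P', WTau P P' ∧ StrongBarb H P' α

/-- Barbed bisimulation w.r.t. the hidden names `H`. -/
def IsBarbedBisim (H : Set Name) (R : Proc → Proc → Prop) : Prop :=
  Symmetric R ∧ ∀ P Q, R P Q →
    (∀ α, StrongBarb H P α → WeakBarb H Q α) ∧
    (∀ S : Proc, ((S.fnames : Set Name) ∩ H = ∅) → R (.par P S) (.par Q S)) ∧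
    (∀ P', Step P Label.tau P' → ∃ Q', WTau Q Q' ∧ R P' Q')

/-- Barbed equivalence w.r.t. the hidden names `H`. -/
def BarbedEquiv (H : Set Name) (P Q : Proc) : Prop :=
  ∃ R, IsBarbedBisim H R ∧ R P Q
/-! ### Closed call-by-name lambda-calculus and the KAM -/

/-- Lambda-terms with de Bruijn indices. -/
inductive Tm
  | bvar : ℕ → Tm
  | lam : Tm → Tm
  | app : Tm → Tm → Tm
  deriving DecidableEq

namespace Tm

/-- Shift the free de Bruijn indices `≥ k` by `d`. -/
def liftT (d : ℕ) : ℕ → Tm → Tm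
  | k, bvar n => if n < k then bvar n else bvar (n + d)
  | k, lam t => lam (liftT d (k + 1) t)
  | k, app t s => app (liftT d k t) (liftT d k s)

/-- Capture-avoiding substitution of `s` for the de Bruijn index `k`. -/
def substT : Tm → ℕ → Tm → Tm
  | bvar n, k, s => if n = k then liftT k 0 s else if k < n then bvar (n - 1) else bvar n
  | lam t, k, s => lam (substT t (k + 1) s)
  | app t u, k, s => app (substT t k s) (substT u k s)

/-- All de Bruijn indices point to one of the `k` enclosing binders. -/
def ClosedUnder : ℕ → Tm → Prop
  | k, bvar n => n < k
  | k, lam t => ClosedUnder (k + 1) t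
  | k, app t s => ClosedUnder k t ∧ ClosedUnder k s

/-- Closed terms. -/
def Closed (t : Tm) : Prop := ClosedUnder 0 t

end Tm

/-- Stacks of the KAM. -/
inductive Stk
  | nil : Stk
  | cons : Tm → Stk → Stk

/-- Configurations of the KAM. -/
structure KConf where
  t : Tm
  π : Stk

/-- Transitions of the KAM. -/
inductive KStep : KConf → KConf → Prop
  | push {t s π} : KStep ⟨.app t s, π⟩ ⟨t, .cons s π⟩
  | grab {t s π} : KStep ⟨.lam t, .cons s π⟩ ⟨t.substT 0 s, π⟩

/-- Reflexive-transitive closure of the KAM transitions. -/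
def KSteps : KConf → KConf → Prop := Relation.ReflTransGen KStep

def StkClosed : Stk → Prop
  | .nil => True
  | .cons t π => t.Closed ∧ StkClosed π

/-- A KAM configuration evaluating a closed term within a stack of closed terms. -/
def KConfClosed (C : KConf) : Prop := C.t.Closed ∧ StkClosed C.π
/-! ### Translation of the KAM into HOcore -/

def hdN : Name := 0
def cN : Name := 1
def bN : Name := 2

/-- Translation of lambda-terms into HOcore. -/
def trT : Tm → Proc
  | .bvar n => .pvar n
  | .app t s =>
      .inp cN (.par ((trT t).lift 1 0)
        (.out cN (.par (.out hdN ((trT s).lift 1 0)) (.out cN (.pvar 0)))))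
  | .lam t => .inp cN (.par (.inp hdN ((trT t).lift 1 1)) (.pvar 0))

/-- Translation of KAM stacks. -/
def trStk : Stk → Proc
  | .nil => .out bN .nil
  | .cons t π => .par (.out hdN (trT t)) (.out cN (trStk π))

/-- Translation of KAM configurations. -/
def trConf (C : KConf) : Proc := .par (trT C.t) (.out cN (trStk C.π))

/-!
The translation simulates the KAM step by step: a push is one communication on `c`, a grab two
(on `c`, then on `hd`), and `⟨λt, []⟩` releases `b!⟨0⟩` after one more communication on `c`.
Conversely, up to structural congruence, every process reachable from `[[C]]` is the translation
of a configuration reachable from `C` or the intermediate state of a grab, until `C` has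
converged: each of these offers exactly the redex fired by the simulation, and none offers `b!`.
Structural congruence is tamed by reading a process as the multiset of its top-level components
with bodies compared up to congruence; a transition then consumes one or two components.
-/

namespace Proc

@[simp] lemma lift_zero (P : Proc) (k : ℕ) : P.lift 0 k = P := by
  induction P generalizing k <;> simp [lift, *]

lemma lift_lift (P : Proc) {d e i j : ℕ} (hij : i ≤ j) (hji : j ≤ i + e) :
    (P.lift e i).lift d j = P.lift (e + d) i := by
  induction P generalizing i j with
  | pvar n =>
    by_cases hn : n < i
    · simp [lift, hn, Nat.lt_of_lt_of_le hn hij]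
    · simp [lift, hn, show ¬n + e < j by omega, Nat.add_assoc]
  | inp a P ih => simp [lift, ih (Nat.succ_le_succ hij) (by omega)]
  | _ => simp_all [lift]

lemma lift_comm (P : Proc) {d e i j : ℕ} (hij : i ≤ j) :
    (P.lift e i).lift d (j + e) = (P.lift d j).lift e i := by
  induction P generalizing i j with
  | pvar n =>
    by_cases hn : n < i
    · simp [lift, hn, show n < j + e by omega, show n < j by omega]
    · by_cases hj : n < j
      · simp [lift, hn, hj]
      · simp [lift, hn, hj, show ¬n + d < i by omega]
        omega
  | inp a P ih =>
    simpa [lift, Nat.add_right_comm] using ih (Nat.succ_le_succ hij)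
  | _ => simp_all [lift]

@[simp] lemma subst_lift (P S : Proc) (k : ℕ) : (P.lift 1 k).subst k S = P := by
  induction P generalizing k with
  | pvar n =>
    by_cases hn : n < k
    · simp [lift, subst, hn, hn.ne, hn.not_gt]
    · simp [lift, subst, hn, show n + 1 ≠ k by omega, show k < n + 1 by omega]
  | _ => simp_all [lift, subst]

lemma lift_subst_comm (P S : Proc) {j k : ℕ} (hjk : j ≤ k) :
    (P.lift 1 j).subst (k + 1) S = (P.subst k S).lift 1 j := by
  induction P generalizing j k with
  | pvar n =>
    by_cases hn : n < j
    · simp [lift, subst, hn, show n ≠ k + 1 by omega, show ¬k + 1 < n by omega,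
        show n ≠ k by omega, show ¬k < n by omega]
    · rcases lt_trichotomy n k with hk | rfl | hk
      · simp [lift, subst, hn, hk.ne, hk.not_gt]
      · simp [lift, subst, hn, lift_lift S (Nat.zero_le j) (show j ≤ 0 + n by omega)]
      · simp [lift, subst, hn, hk, hk.ne', show ¬n - 1 < j by omega]
        omega
  | _ => simp_all [lift, subst]

end Proc

lemma trT_liftT (t : Tm) (d k : ℕ) : (trT t).lift d k = trT (t.liftT d k) := by
  induction t generalizing k with
  | bvar n => by_cases hn : n < k <;> simp [trT, Tm.liftT, Proc.lift, hn]
  | lam t ih =>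
    simpa [trT, Tm.liftT, Proc.lift, ← ih] using
      Proc.lift_comm (trT t) (d := d) (e := 1) (show 1 ≤ k + 1 by omega)
  | app t s iht ihs =>
    simp [trT, Tm.liftT, Proc.lift, ← iht, ← ihs, Proc.lift_comm _ (Nat.zero_le k)]

lemma trT_substT (t s : Tm) (k : ℕ) : (trT t).subst k (trT s) = trT (t.substT k s) := by
  induction t generalizing k with
  | bvar n =>
    by_cases hn : n = k
    · simp [trT, Tm.substT, Proc.subst, hn, trT_liftT]
    · by_cases hk : k < n <;> simp [trT, Tm.substT, Proc.subst, hn, hk]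
  | lam t ih =>
    simp [trT, Tm.substT, Proc.subst, ← ih, Proc.lift_subst_comm _ _ (show 1 ≤ k + 1 by omega)]
  | app t u iht ihu =>
    simp [trT, Tm.substT, Proc.subst, ← iht, ← ihu, Proc.lift_subst_comm _ _ (Nat.zero_le k)]

namespace SCong

lemma map {f : ℕ → Proc → Proc} (hnil : ∀ k, f k .nil = .nil)
    (hpar : ∀ k P Q, f k (.par P Q) = .par (f k P) (f k Q))
    (hinp : ∀ k a P, f k (.inp a P) = .inp a (f (k + 1) P))
    (hout : ∀ k a P, f k (.out a P) = .out a (f k P)) {P Q : Proc} (h : SCong P Q) (k : ℕ) :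
    SCong (f k P) (f k Q) := by
  induction h generalizing k with
  | refl => exact .refl _
  | symm _ ih => exact (ih k).symm
  | trans _ _ ih₁ ih₂ => exact (ih₁ k).trans (ih₂ k)
  | parComm => simpa only [hpar] using .parComm _ _
  | parAssoc => simpa only [hpar] using .parAssoc _ _ _
  | parNil P => simpa only [hpar, hnil] using .parNil (f k P)
  | parCong _ _ ih₁ ih₂ => simpa only [hpar] using .parCong (ih₁ k) (ih₂ k)
  | inpCong a _ ih => simpa only [hinp] using .inpCong a (ih (k + 1))
  | outCong a _ ih => simpa only [hout] using .outCong a (ih k)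

lemma lift {P Q : Proc} (h : SCong P Q) (d k : ℕ) : SCong (P.lift d k) (Q.lift d k) :=
  h.map (f := fun k P => P.lift d k) (fun _ => rfl) (fun _ _ _ => rfl) (fun _ _ _ => rfl)
    (fun _ _ _ => rfl) k

lemma subst_left {P Q : Proc} (h : SCong P Q) (k : ℕ) (S : Proc) :
    SCong (P.subst k S) (Q.subst k S) :=
  h.map (f := fun k P => P.subst k S) (fun _ => rfl) (fun _ _ _ => rfl) (fun _ _ _ => rfl)
    (fun _ _ _ => rfl) k

lemma subst_right {S S' : Proc} (h : SCong S S') (P : Proc) (k : ℕ) :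
    SCong (P.subst k S) (P.subst k S') := by
  induction P generalizing k with
  | nil => exact .refl _
  | pvar n =>
    simp only [Proc.subst]
    split_ifs
    exacts [h.lift k 0, .refl _, .refl _]
  | par P Q ihP ihQ => exact .parCong (ihP k) (ihQ k)
  | inp a P ih => exact .inpCong a (ih (k + 1))
  | out a P ih => exact .outCong a (ih k)

lemma subst {P Q S S' : Proc} (h : SCong P Q) (hS : SCong S S') (k : ℕ) :
    SCong (P.subst k S) (Q.subst k S') :=
  (h.subst_left k S).trans (hS.subst_right Q k)

end SCong

namespace Proc

def atoms : Proc → Multiset Proc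
  | nil => 0
  | par P Q => atoms P + atoms Q
  | P => {P}

inductive AtomCong : Proc → Proc → Prop
  | pvar (n : ℕ) : AtomCong (pvar n) (pvar n)
  | inp {P Q : Proc} (a : Name) : SCong P Q → AtomCong (inp a P) (inp a Q)
  | out {P Q : Proc} (a : Name) : SCong P Q → AtomCong (out a P) (out a Q)

lemma AtomCong.symm {X Y : Proc} : AtomCong X Y → AtomCong Y X
  | .pvar n => .pvar n
  | .inp a h => .inp a h.symm
  | .out a h => .out a h.symm

lemma AtomCong.trans {X Y Z : Proc} : AtomCong X Y → AtomCong Y Z → AtomCong X Z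
  | .pvar _, h => h
  | .inp a h, .inp _ h' => .inp a (h.trans h')
  | .out a h, .out _ h' => .out a (h.trans h')

instance : IsTrans Proc AtomCong := ⟨fun _ _ _ => AtomCong.trans⟩

abbrev AtomRel : Multiset Proc → Multiset Proc → Prop := Multiset.Rel AtomCong

lemma AtomRel.symm {m n : Multiset Proc} (h : AtomRel m n) : AtomRel n m :=
  (Multiset.rel_flip.2 h).mono fun _ _ _ _ => AtomCong.symm

lemma AtomRel.trans {m n p : Multiset Proc} (h₁ : AtomRel m n) (h₂ : AtomRel n p) : AtomRel m p :=
  Multiset.Rel.trans AtomCong h₁ h₂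

lemma atomRel_singleton {X Y : Proc} (h : AtomCong X Y) : AtomRel {X} {Y} :=
  .cons h .zero

lemma atomRel_atoms_refl (P : Proc) : AtomRel (atoms P) (atoms P) := by
  induction P with
  | nil => exact .zero
  | pvar n => exact atomRel_singleton (.pvar n)
  | par P Q ihP ihQ => exact ihP.add ihQ
  | inp a P => exact atomRel_singleton (.inp a (.refl P))
  | out a P => exact atomRel_singleton (.out a (.refl P))

lemma atomRel_atoms_of_scong {P Q : Proc} (h : SCong P Q) : AtomRel (atoms P) (atoms Q) := by
  induction h with
  | refl P => exact atomRel_atoms_refl P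
  | symm _ ih => exact ih.symm
  | trans _ _ ih₁ ih₂ => exact ih₁.trans ih₂
  | parComm P Q =>
    simpa only [atoms, add_comm (atoms P)] using (atomRel_atoms_refl (.par Q P))
  | parAssoc P Q R =>
    simpa only [atoms, add_assoc] using atomRel_atoms_refl (.par P (.par Q R))
  | parNil P => simpa only [atoms, add_zero] using atomRel_atoms_refl P
  | parCong _ _ ih₁ ih₂ => exact ih₁.add ih₂
  | inpCong a h => exact atomRel_singleton (.inp a h)
  | outCong a h => exact atomRel_singleton (.out a h)


/-- `Redex l c p`: a transition with label `l` consumes the components `c` and produces `p`. -/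
inductive Redex : Label → Multiset Proc → Multiset Proc → Prop
  | out (a : Name) (R : Proc) : Redex (.outl a R) {out a R} 0
  | inp (a : Name) (T R : Proc) : Redex (.inl a R) {inp a T} (atoms (T.subst 0 R))
  | comm (a : Name) (R T : Proc) : Redex .tau ({out a R} + {inp a T}) (atoms (T.subst 0 R))

lemma exists_redex_of_step {P P' : Proc} {l : Label} (h : Step P l P') :
    ∃ c p r, Redex l c p ∧ AtomRel (atoms P) (c + r) ∧ AtomRel (atoms P') (p + r) := by
  induction h with
  | outS a R => exact ⟨_, _, 0, .out a R, atomRel_atoms_refl _, .zero⟩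
  | inpS a T R =>
    exact ⟨_, _, 0, .inp a T R, atomRel_atoms_refl _, by simpa using atomRel_atoms_refl _⟩
  | parL Q _ ih =>
    obtain ⟨c, p, r, hl, h₁, h₂⟩ := ih
    refine ⟨c, p, r + atoms Q, hl, ?_, ?_⟩ <;> rw [← add_assoc]
    exacts [h₁.add (atomRel_atoms_refl Q), h₂.add (atomRel_atoms_refl Q)]
  | parR Q _ ih =>
    obtain ⟨c, p, r, hl, h₁, h₂⟩ := ih
    refine ⟨c, p, atoms Q + r, hl, ?_, ?_⟩ <;> rw [add_left_comm]
    exacts [(atomRel_atoms_refl Q).add h₁, (atomRel_atoms_refl Q).add h₂]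
  | @comm1 _ _ _ _ a R _ _ ih₁ ih₂ =>
    obtain ⟨c₁, p₁, r₁, ⟨⟩, h₁, h₁'⟩ := ih₁
    obtain ⟨c₂, p₂, r₂, hl, h₂, h₂'⟩ := ih₂
    cases hl with | inp _ T _ =>
    refine ⟨_, _, r₁ + r₂, .comm a R T, ?_, ?_⟩
    · rw [add_add_add_comm]; exact h₁.add h₂
    · simpa [atoms, add_left_comm] using h₁'.add h₂'
  | @comm2 _ _ _ _ a R _ _ ih₁ ih₂ =>
    obtain ⟨c₁, p₁, r₁, hl, h₁, h₁'⟩ := ih₁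
    obtain ⟨c₂, p₂, r₂, ⟨⟩, h₂, h₂'⟩ := ih₂
    cases hl with | inp _ T _ =>
    refine ⟨_, _, r₂ + r₁, .comm a R T, ?_, ?_⟩
    · rw [add_add_add_comm, add_comm]; exact h₁.add h₂
    · simpa [atoms, add_assoc, add_comm r₁] using h₁'.add h₂'
  | struct hP _ hQ ih =>
    obtain ⟨c, p, r, hl, h₁, h₂⟩ := ih
    exact ⟨c, p, r, hl, (atomRel_atoms_of_scong hP).trans h₁,
      (atomRel_atoms_of_scong hQ).symm.trans h₂⟩

lemma exists_comm_of_tauStep {P P' : Proc} {M : Multiset Proc} (hM : AtomRel (atoms P) M)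
    (h : Step P .tau P') :
    ∃ a R T r, M = out a R ::ₘ inp a T ::ₘ r ∧ AtomRel (atoms P') (atoms (T.subst 0 R) + r) := by
  obtain ⟨c, p, r, ⟨⟩, h₁, h₂⟩ := exists_redex_of_step h
  have hM' := h₁.symm.trans hM
  simp only [Multiset.singleton_add, Multiset.cons_add] at hM'
  obtain ⟨_, _, hR, hM'', rfl⟩ := Multiset.rel_cons_left.1 hM'
  obtain ⟨_, r', hT, hr, rfl⟩ := Multiset.rel_cons_left.1 hM''
  cases hR with | out _ hR =>
  cases hT with | inp _ hT =>
  exact ⟨_, _, _, r', rfl, h₂.trans ((atomRel_atoms_of_scong (hT.subst hR 0)).add hr)⟩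

lemma exists_out_mem_of_step {P P' R : Proc} {a : Name} {M : Multiset Proc}
    (hM : AtomRel (atoms P) M) (h : Step P (.outl a R) P') : ∃ R', out a R' ∈ M := by
  obtain ⟨c, p, r, ⟨⟩, h₁, -⟩ := exists_redex_of_step h
  obtain ⟨_, _, ⟨⟩, -, rfl⟩ := Multiset.rel_cons_left.1 (h₁.symm.trans hM)
  exact ⟨_, Multiset.mem_cons_self _ _⟩

end Proc

/-- The process between the two communications that simulate a grab. -/
def grabState (t s : Tm) (π : Stk) : Proc := .par (.inp hdN (trT t)) (trStk (.cons s π))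

lemma subst_trT_app_body (t s : Tm) (π : Stk) :
    (Proc.par ((trT t).lift 1 0)
      (.out cN (.par (.out hdN ((trT s).lift 1 0)) (.out cN (.pvar 0))))).subst 0 (trStk π) =
      trConf ⟨t, .cons s π⟩ := by
  simp [Proc.subst, trConf, trStk]

lemma subst_trT_lam_body (t : Tm) (S : Proc) :
    (Proc.par (.inp hdN ((trT t).lift 1 1)) (.pvar 0)).subst 0 S = .par (.inp hdN (trT t)) S := by
  simp [Proc.subst]

lemma tauStep_trConf_of_trT_eq_inp {t : Tm} {B : Proc} (π : Stk) (h : trT t = .inp cN B) :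
    TauStep (trConf ⟨t, π⟩) (B.subst 0 (trStk π)) := by
  have hcomm := Step.comm2 (.inpS cN B (trStk π)) (.outS cN (trStk π))
  rw [← h] at hcomm
  exact .struct (.refl _) hcomm (.parNil _)

lemma tauStep_trConf_app (t s : Tm) (π : Stk) :
    TauStep (trConf ⟨.app t s, π⟩) (trConf ⟨t, .cons s π⟩) := by
  have h := tauStep_trConf_of_trT_eq_inp (t := .app t s) π rfl
  rwa [subst_trT_app_body] at h

lemma tauStep_trConf_lam (t : Tm) (π : Stk) :
    TauStep (trConf ⟨.lam t, π⟩) (.par (.inp hdN (trT t)) (trStk π)) := by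
  have h := tauStep_trConf_of_trT_eq_inp (t := .lam t) π rfl
  rwa [subst_trT_lam_body] at h

lemma tauStep_grabState (t s : Tm) (π : Stk) :
    TauStep (grabState t s π) (trConf ⟨t.substT 0 s, π⟩) := by
  refine .struct (.refl _) (.comm2 (.inpS hdN (trT t) (trT s)) (.parL _ (.outS hdN (trT s)))) ?_
  rw [trT_substT]
  exact .parCong (.refl _) ((SCong.parComm _ _).trans (.parNil _))

lemma KStep.wTau_trConf {C C' : KConf} (h : KStep C C') : WTau (trConf C) (trConf C') := by
  cases h with
  | push => exact .single (tauStep_trConf_app ..)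
  | grab => exact .tail (.single (tauStep_trConf_lam ..)) (tauStep_grabState ..)

lemma KSteps.wTau_trConf {C C' : KConf} (h : KSteps C C') : WTau (trConf C) (trConf C') := by
  induction h with
  | refl => exact .refl
  | tail _ h ih => exact ih.trans h.wTau_trConf

lemma weakBarb_trConf_of_kSteps_lam {C : KConf} {t : Tm} (h : KSteps C ⟨.lam t, .nil⟩) :
    WeakBarb ∅ (trConf C) (.outb bN) := by
  refine ⟨_, h.wTau_trConf.tail (tauStep_trConf_lam t .nil), ?_⟩
  exact ⟨Set.notMem_empty _, _, _, .parR _ (.outS bN .nil)⟩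

lemma atoms_trT (t : Tm) : (trT t).atoms = {trT t} := by
  cases t <;> rfl

lemma atoms_trConf (t : Tm) (π : Stk) :
    (trConf ⟨t, π⟩).atoms = trT t ::ₘ .out cN (trStk π) ::ₘ 0 := by
  simp [trConf, Proc.atoms, atoms_trT]

lemma atoms_grabState (t s : Tm) (π : Stk) :
    (grabState t s π).atoms = .inp hdN (trT t) ::ₘ .out hdN (trT s) ::ₘ .out cN (trStk π) ::ₘ 0 :=
  rfl

lemma out_ne_trT (a : Name) (P : Proc) (t : Tm) : .out a P ≠ trT t := by
  cases t <;> simp [trT]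

lemma eq_of_comm_eq_atoms_trConf {a : Name} {R T : Proc} {r : Multiset Proc} {t : Tm} {π : Stk}
    (h : .out a R ::ₘ .inp a T ::ₘ r = (trConf ⟨t, π⟩).atoms) :
    a = cN ∧ R = trStk π ∧ trT t = .inp cN T ∧ r = 0 := by
  rw [atoms_trConf] at h
  have hR : Proc.out a R ∈ trT t ::ₘ .out cN (trStk π) ::ₘ 0 := h ▸ Multiset.mem_cons_self _ _
  simp only [Multiset.mem_cons, out_ne_trT, Proc.out.injEq, Multiset.notMem_zero, false_or,
    or_false] at hR
  obtain ⟨rfl, rfl⟩ := hR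
  rw [Multiset.cons_swap (trT t), Multiset.cons_inj_right, Multiset.cons_zero, eq_comm,
    Multiset.singleton_eq_cons_iff] at h
  exact ⟨rfl, rfl, h.1, h.2⟩

lemma eq_of_comm_eq_atoms_grabState {a : Name} {R T : Proc} {r : Multiset Proc} {t s : Tm}
    {π : Stk} (h : .out a R ::ₘ .inp a T ::ₘ r = (grabState t s π).atoms) :
    a = hdN ∧ R = trT s ∧ T = trT t ∧ r = .out cN (trStk π) ::ₘ 0 := by
  have hT : Proc.inp a T ∈ (grabState t s π).atoms :=
    h ▸ Multiset.mem_cons_of_mem (Multiset.mem_cons_self _ _)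
  simp only [atoms_grabState, Multiset.mem_cons, Proc.inp.injEq, Multiset.notMem_zero, reduceCtorEq,
    or_false] at hT
  obtain ⟨rfl, rfl⟩ := hT
  have hR : Proc.out hdN R ∈ (grabState t s π).atoms := h ▸ Multiset.mem_cons_self _ _
  simp only [atoms_grabState, Multiset.mem_cons, Proc.out.injEq, Multiset.notMem_zero,
    reduceCtorEq, hdN, cN, false_or, false_and, or_false] at hR
  obtain ⟨-, rfl⟩ := hR
  rw [atoms_grabState, Multiset.cons_swap, Multiset.cons_inj_right, Multiset.cons_inj_right] at h
  exact ⟨rfl, rfl, rfl, h⟩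

def KamInv (C : KConf) (P : Proc) : Prop :=
  (∃ C', KSteps C C' ∧ Proc.AtomRel P.atoms (trConf C').atoms) ∨
  (∃ t s π, KSteps C ⟨.lam t, .cons s π⟩ ∧ Proc.AtomRel P.atoms (grabState t s π).atoms) ∨
  ∃ t, KSteps C ⟨.lam t, .nil⟩

lemma KamInv.tauStep {C : KConf} {P P' : Proc} (hP : KamInv C P) (h : TauStep P P') :
    KamInv C P' := by
  rcases hP with ⟨⟨t, π⟩, hC, hP⟩ | ⟨t, s, π, hC, hP⟩ | hconv
  · obtain ⟨a, R, T, r, hM, hP'⟩ := Proc.exists_comm_of_tauStep hP h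
    obtain ⟨rfl, rfl, ht, rfl⟩ := eq_of_comm_eq_atoms_trConf hM.symm
    rw [add_zero] at hP'
    cases t with
    | bvar n => cases ht
    | app u v =>
      cases ht
      rw [subst_trT_app_body] at hP'
      exact .inl ⟨_, hC.tail .push, hP'⟩
    | lam u =>
      cases ht
      rw [subst_trT_lam_body] at hP'
      cases π with
      | nil => exact .inr (.inr ⟨u, hC⟩)
      | cons s π => exact .inr (.inl ⟨u, s, π, hC, hP'⟩)
  · obtain ⟨a, R, T, r, hM, hP'⟩ := Proc.exists_comm_of_tauStep hP h
    obtain ⟨rfl, rfl, rfl, rfl⟩ := eq_of_comm_eq_atoms_grabState hM.symm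
    rw [trT_substT, atoms_trT, Multiset.singleton_add] at hP'
    exact .inl ⟨_, hC.tail .grab, by rwa [atoms_trConf]⟩
  · exact .inr (.inr hconv)

lemma KamInv.exists_kSteps_lam_of_strongBarb {C : KConf} {P : Proc} (hP : KamInv C P)
    (hb : StrongBarb ∅ P (.outb bN)) : ∃ t, KSteps C ⟨.lam t, .nil⟩ := by
  obtain ⟨-, R, P', h⟩ := hb
  rcases hP with ⟨⟨t, π⟩, -, hP⟩ | ⟨t, s, π, -, hP⟩ | hconv
  · obtain ⟨R', hR'⟩ := Proc.exists_out_mem_of_step hP h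
    simp [atoms_trConf, out_ne_trT, bN, cN] at hR'
  · obtain ⟨R', hR'⟩ := Proc.exists_out_mem_of_step hP h
    simp [atoms_grabState, bN, cN, hdN] at hR'
  · exact hconv

lemma kamInv_of_wTau {C : KConf} {P : Proc} (h : WTau (trConf C) P) : KamInv C P := by
  induction h with
  | refl => exact .inl ⟨C, .refl, Proc.atomRel_atoms_refl _⟩
  | tail _ h ih => exact ih.tauStep h

theorem kam_convergence_iff_weak_barb_general (C : KConf) :
    (∃ t : Tm, KSteps C ⟨.lam t, .nil⟩) ↔
      WeakBarb (∅ : Set Name) (trConf C) (.outb bN) :=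
  ⟨fun ⟨_, h⟩ => weakBarb_trConf_of_kSteps_lam h,
    fun ⟨_, hw, hb⟩ => (kamInv_of_wTau hw).exists_kSteps_lam_of_strongBarb hb⟩

/-- `C ->* <\x.t | []>` for some `t` iff `[[C]]` has a weak barb on the coname `b!`
w.r.t. the empty set of hidden names. -/
theorem kam_convergence_iff_weak_barb (C : KConf) (hC : KConfClosed C) :
    (∃ t : Tm, KSteps C ⟨.lam t, .nil⟩) ↔
      WeakBarb (∅ : Set Name) (trConf C) (.outb bN) :=
  kam_convergence_iff_weak_barb_general C
end

section
/- Call-by-value normal-form bisimilarity coincides with machine bisimilarity of call-by-value NFB machines: for all open call-by-value lambda-terms t and s, t ~nf s if and only if there exists n > max(fv(t) ∪ fv(s)) such that <t | [] | n>_ev ~m <s | [] | n>_ev. -/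
/-! ### The open call-by-value lambda-calculus and the CK machine -/

/-- Call-by-value lambda-terms: free variables `fvar f` (natural numbers) and
bound variables in de Bruijn representation. -/
inductive CTm
  | fvar : ℕ → CTm
  | bvar : ℕ → CTm
  | lam : CTm → CTm
  | app : CTm → CTm → CTm
  deriving DecidableEq

namespace CTm

/-- Shift the de Bruijn indices `≥ k` by `d`. -/
def liftC (d : ℕ) : ℕ → CTm → CTm
  | _, fvar f => fvar f
  | k, bvar n => if n < k then bvar n else bvar (n + d)
  | k, lam t => lam (liftC d (k + 1) t)
  | k, app t s => app (liftC d k t) (liftC d k s)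

/-- Capture-avoiding substitution of `s` for the de Bruijn index `k`. -/
def substC : CTm → ℕ → CTm → CTm
  | fvar f, _, _ => fvar f
  | bvar n, k, s => if n = k then liftC k 0 s else if k < n then bvar (n - 1) else bvar n
  | lam t, k, s => lam (substC t (k + 1) s)
  | app t u, k, s => app (substC t k s) (substC u k s)

end CTm

/-- Free variables of a term. -/
def fvC : CTm → Finset ℕ
  | .fvar f => {f}
  | .bvar _ => ∅
  | .lam t => fvC t
  | .app t s => fvC t ∪ fvC s

/-- Values: free variables, variables, and lambda-abstractions. -/
def CIsVal : CTm → Prop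
  | .app _ _ => False
  | _ => True

/-- Stack items: an argument `arg(t)` or an already evaluated function `fun(v)`. -/
inductive CItem
  | argI : CTm → CItem
  | funI : CTm → CItem

/-- Stacks of the CK machine. -/
abbrev CStack := List CItem

def fvItem : CItem → Finset ℕ
  | .argI t => fvC t
  | .funI v => fvC v

def fvSt : CStack → Finset ℕ
  | [] => ∅
  | i :: π => fvItem i ∪ fvSt π

/-- Configurations of the CK machine: evaluation mode `<t | π>` and
continuation mode `<π | v>`. -/
inductive CKConf
  | ev : CTm → CStack → CKConf
  | cont : CStack → CTm → CKConf

/-- Transitions of the CK machine. -/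
inductive CKStep : CKConf → CKConf → Prop
  | fn {t s π} : CKStep (.ev (.app t s) π) (.ev t (.argI s :: π))
  | switch {v π} : CIsVal v → CKStep (.ev v π) (.cont π v)
  | arg {t π v} : CKStep (.cont (.argI t :: π) v) (.ev t (.funI v :: π))
  | beta {t π v} : CKStep (.cont (.funI (.lam t) :: π) v) (.ev (t.substC 0 v) π)

/-- Reflexive-transitive closure of CK transitions. -/
def CKSteps : CKConf → CKConf → Prop := Relation.ReflTransGen CKStep

/-! ### Call-by-value normal-form bisimilarity -/

/-- Call-by-value normal-form bisimulation, on CK configurations. -/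
def IsNFBisimV (R : CKConf → CKConf → Prop) : Prop :=
  Symmetric R ∧ ∀ C C', R C C' →
    (∀ v, CKSteps C (.cont [] v) →
      ∃ v', CKSteps C' (.cont [] v') ∧
        ∀ f, f ∉ fvC v ∪ fvC v' →
          R (.cont [.funI v] (.fvar f)) (.cont [.funI v'] (.fvar f))) ∧
    (∀ f π v, CKSteps C (.cont (.funI (.fvar f) :: π) v) →
      ∃ π' v', CKSteps C' (.cont (.funI (.fvar f) :: π') v') ∧
        ∀ f', f' ∉ fvC v ∪ fvC v' ∪ fvSt π ∪ fvSt π' →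
          R (.cont [.funI v] (.fvar f')) (.cont [.funI v'] (.fvar f')) ∧
          R (.cont π (.fvar f')) (.cont π' (.fvar f')))

/-- Call-by-value normal-form bisimilarity. -/
def NFBisimV (C C' : CKConf) : Prop := ∃ R, IsNFBisimV R ∧ R C C'

/-! ### The call-by-value NFB machine -/

/-- Flags of the call-by-value NFB machine. -/
inductive CNFlag
  | flam | fval | fctx
  | fvarF : ℕ → CNFlag
  deriving DecidableEq

/-- Labels of the call-by-value NFB machine. -/
inductive CNLabel
  | tau : CNLabel
  | flag : CNFlag → CNLabel

/-- Configurations of the call-by-value NFB machine; the `stuck` mode is the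
intermediate state between the two flags of the `Stuck-Val` and `Stuck-Context`
steps. -/
inductive CNConf
  | ev : CTm → CStack → ℕ → CNConf
  | cont : CStack → CTm → ℕ → CNConf
  | stuck : CStack → CTm → ℕ → CNConf

/-- Transitions of the call-by-value NFB machine. -/
inductive CNStep : CNConf → CNLabel → CNConf → Prop
  | fn {t s π n} : CNStep (.ev (.app t s) π n) .tau (.ev t (.argI s :: π) n)
  | switch {v π n} : CIsVal v → CNStep (.ev v π n) .tau (.cont π v n)
  | arg {t π v n} : CNStep (.cont (.argI t :: π) v n) .tau (.ev t (.funI v :: π) n)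
  | beta {t π v n} :
      CNStep (.cont (.funI (.lam t) :: π) v n) .tau (.ev (t.substC 0 v) π n)
  | val {v n} : CNStep (.cont [] v n) (.flag .flam) (.cont [.funI v] (.fvar n) (n + 1))
  | stuckFlag {f π v n} :
      CNStep (.cont (.funI (.fvar f) :: π) v n) (.flag (.fvarF f)) (.stuck π v n)
  | stuckVal {π v n} :
      CNStep (.stuck π v n) (.flag .fval) (.cont [.funI v] (.fvar n) (n + 1))
  | stuckCtx {π v n} :
      CNStep (.stuck π v n) (.flag .fctx) (.cont π (.fvar n) (n + 1))

/-- Silent transitions of the call-by-value NFB machine. -/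
def CNTau (C C' : CNConf) : Prop := CNStep C .tau C'

/-- Flagged transitions of the call-by-value NFB machine. -/
def CNFlagStep (C : CNConf) (F : CNFlag) (C' : CNConf) : Prop := CNStep C (.flag F) C'

/-- The call-by-value NFB machine has no terminating flagged transitions. -/
def CNFinal : CNConf → CNFlag → Prop := fun _ _ => False
/-! ### Machine bisimilarity for flagged abstract machines -/

/-- Machine bisimulation for a flagged abstract machine given by silent steps
`tstep`, flagged steps `fstep`, and terminating flagged transitions `final`. -/
def IsMachineBisim {Conf Fl : Type} (tstep : Conf → Conf → Prop)
    (fstep : Conf → Fl → Conf → Prop) (final : Conf → Fl → Prop)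
    (R : Conf → Conf → Prop) : Prop :=
  Symmetric R ∧ ∀ C1 C2, R C1 C2 →
    (∀ (F : Fl) (C1' : Conf),
        (∃ C, Relation.ReflTransGen tstep C1 C ∧ fstep C F C1') →
        ∃ C2', (∃ C, Relation.ReflTransGen tstep C2 C ∧ fstep C F C2') ∧ R C1' C2') ∧
    (∀ F : Fl, (∃ C, Relation.ReflTransGen tstep C1 C ∧ final C F) →
        ∃ C, Relation.ReflTransGen tstep C2 C ∧ final C F)

/-- Machine bisimilarity: the largest machine bisimulation. -/
def MachineBisim {Conf Fl : Type} (tstep : Conf → Conf → Prop)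
    (fstep : Conf → Fl → Conf → Prop) (final : Conf → Fl → Prop)
    (C1 C2 : Conf) : Prop :=
  ∃ R, IsMachineBisim tstep fstep final R ∧ R C1 C2

/-!
The NFB machine is the CK machine run together with a counter that supplies fresh variables, so a
normal-form bisimulation becomes a machine bisimulation once every fresh variable it tests is taken
to be the current counter, and conversely. The converse is where the work lies: a machine
bisimulation only tests the one fresh variable `n` offered by the counter, whereas `~nf` asks for
every fresh `f`. Renaming bridges the gap: a renaming of free variables that acts on counter values
from some point on as a translation commutes with every machine transition (the machine never
compares variables), hence preserves machine bisimilarity; and sending `n` to `f` while moving all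
names above `n` beyond `f` is such a renaming.
-/

open Finset

namespace CTm

def rename (ρ : ℕ → ℕ) : CTm → CTm
  | fvar f => fvar (ρ f)
  | bvar n => bvar n
  | lam t => lam (rename ρ t)
  | app t s => app (rename ρ t) (rename ρ s)

theorem rename_liftC (ρ : ℕ → ℕ) (d : ℕ) (t : CTm) (k : ℕ) :
    (liftC d k t).rename ρ = liftC d k (t.rename ρ) := by
  induction t generalizing k with
  | bvar n => simp only [liftC, rename]; split <;> rfl
  | _ => simp [liftC, rename, *]

theorem rename_substC (ρ : ℕ → ℕ) (s t : CTm) (k : ℕ) :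
    (substC t k s).rename ρ = substC (t.rename ρ) k (s.rename ρ) := by
  induction t generalizing k with
  | bvar n =>
    simp only [substC, rename]
    split
    · exact rename_liftC ρ k s 0
    · split <;> rfl
  | _ => simp [substC, rename, *]

theorem rename_eq_self {ρ : ℕ → ℕ} {t : CTm} (h : ∀ x ∈ fvC t, ρ x = x) :
    t.rename ρ = t := by
  induction t with
  | fvar f => simp [rename, h f (by simp [fvC])]
  | bvar n => rfl
  | lam t ih => simp [rename, ih (by simpa [fvC] using h)]
  | app t s iht ihs =>
    simp only [fvC, mem_union] at h
    simp [rename, iht fun x hx => h x (.inl hx), ihs fun x hx => h x (.inr hx)]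

theorem fvC_liftC (d : ℕ) (t : CTm) (k : ℕ) : fvC (liftC d k t) = fvC t := by
  induction t generalizing k with
  | bvar n => simp only [liftC]; split <;> rfl
  | _ => simp [liftC, fvC, *]

theorem fvC_substC_subset (s t : CTm) (k : ℕ) : fvC (substC t k s) ⊆ fvC t ∪ fvC s := by
  induction t generalizing k with
  | fvar f => simp [substC, fvC]
  | bvar n =>
    simp only [substC]
    split
    · simp [fvC_liftC]
    · split <;> simp [fvC]
  | lam t ih => exact ih (k + 1)
  | app t u iht ihu =>
    simp only [substC, fvC]
    exact union_subset ((iht k).trans (union_subset_union_left subset_union_left))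
      ((ihu k).trans (union_subset_union_left subset_union_right))

end CTm

theorem CIsVal.rename {v : CTm} (ρ : ℕ → ℕ) (h : CIsVal v) : CIsVal (v.rename ρ) := by
  cases v <;> trivial

def CItem.rename (ρ : ℕ → ℕ) : CItem → CItem
  | argI t => argI (t.rename ρ)
  | funI v => funI (v.rename ρ)

theorem renameStack_eq_self {ρ : ℕ → ℕ} {π : CStack} (h : ∀ x ∈ fvSt π, ρ x = x) :
    π.map (CItem.rename ρ) = π := by
  induction π with
  | nil => rfl
  | cons i π ih =>
    simp only [fvSt, mem_union] at h
    have hi : ∀ x ∈ fvItem i, ρ x = x := fun x hx => h x (.inl hx)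
    rw [List.map_cons, ih fun x hx => h x (.inr hx)]
    cases i <;> simp [CItem.rename, CTm.rename_eq_self hi]

namespace CKConf

def fv : CKConf → Finset ℕ
  | ev t π => fvC t ∪ fvSt π
  | cont π v => fvC v ∪ fvSt π

def toCN : CKConf → ℕ → CNConf
  | ev t π, n => .ev t π n
  | cont π v, n => .cont π v n

end CKConf

theorem CKStep.fv_subset {C D : CKConf} (h : CKStep C D) : D.fv ⊆ C.fv := by
  cases h with
  | beta =>
    intro x hx
    simp only [CKConf.fv, fvSt, fvItem, fvC, mem_union] at hx ⊢
    rcases hx with hx | hx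
    · have := CTm.fvC_substC_subset _ _ _ hx
      simp only [mem_union] at this
      tauto
    · tauto
  | _ => intro x; simp only [CKConf.fv, fvSt, fvItem, fvC, mem_union]; tauto

theorem CKSteps.fv_subset {C D : CKConf} (h : CKSteps C D) : D.fv ⊆ C.fv := by
  induction h with
  | refl => exact Subset.rfl
  | tail _ hstep ih => exact hstep.fv_subset.trans ih

theorem fv_cont_fvar_subset_range {π : CStack} {f n : ℕ} (hπ : fvSt π ⊆ range n)
    (hf : f < n) :
    (CKConf.cont π (.fvar f)).fv ⊆ range n :=
  union_subset (by simpa [fvC] using hf) hπ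

theorem fv_cont_fvar_subset_range_succ {π : CStack} {n : ℕ} (hπ : fvSt π ⊆ range n) :
    (CKConf.cont π (.fvar n)).fv ⊆ range (n + 1) :=
  fv_cont_fvar_subset_range (hπ.trans (range_subset_range.2 n.le_succ)) n.lt_succ_self

theorem fvSt_singleton_funI (v : CTm) : fvSt [.funI v] = fvC v := by
  simp [fvSt, fvItem]

section MachineBisim

variable {Conf Fl : Type} {tstep : Conf → Conf → Prop} {fstep : Conf → Fl → Conf → Prop}
  {final : Conf → Fl → Prop}

theorem isMachineBisim_machineBisim :
    IsMachineBisim tstep fstep final (MachineBisim tstep fstep final) := by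
  refine ⟨fun _ _ ⟨R, hR, h⟩ => ⟨R, hR, hR.1 h⟩, ?_⟩
  rintro C1 C2 ⟨R, hR, h⟩
  obtain ⟨hflag, hfinal⟩ := hR.2 C1 C2 h
  refine ⟨fun F C1' h1 => ?_, hfinal⟩
  obtain ⟨C2', h2, hR'⟩ := hflag F C1' h1
  exact ⟨C2', h2, R, hR, hR'⟩

theorem isMachineBisim_of_flag_step {R : Conf → Conf → Prop} (hfinal : ∀ C F, ¬ final C F)
    (hsymm : ∀ ⦃C1 C2⦄, R C1 C2 → R C2 C1)
    (hstep : ∀ C1 C2, R C1 C2 → ∀ F C1',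
      (∃ C, Relation.ReflTransGen tstep C1 C ∧ fstep C F C1') →
      ∃ C2', (∃ C, Relation.ReflTransGen tstep C2 C ∧ fstep C F C2') ∧ R C1' C2') :
    IsMachineBisim tstep fstep final R :=
  ⟨hsymm, fun C1 C2 h => ⟨hstep C1 C2 h, fun F ⟨C, _, hC⟩ => (hfinal C F hC).elim⟩⟩

end MachineBisim

theorem isNFBisimV_nfBisimV : IsNFBisimV NFBisimV := by
  refine ⟨fun _ _ ⟨R, hR, h⟩ => ⟨R, hR, hR.1 h⟩, ?_⟩
  rintro C C' ⟨R, hR, h⟩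
  obtain ⟨hval, hstuck⟩ := hR.2 C C' h
  refine ⟨fun v hv => ?_, fun f π v hv => ?_⟩
  · obtain ⟨v', hv', hR'⟩ := hval v hv
    exact ⟨v', hv', fun f hf => ⟨R, hR, hR' f hf⟩⟩
  · obtain ⟨π', v', hv', hR'⟩ := hstuck f π v hv
    exact ⟨π', v', hv', fun f' hf' =>
      ⟨⟨R, hR, (hR' f' hf').1⟩, ⟨R, hR, (hR' f' hf').2⟩⟩⟩

def CNWeakFlagStep (C : CNConf) (F : CNFlag) (C' : CNConf) : Prop :=
  ∃ Z, Relation.ReflTransGen CNTau C Z ∧ CNFlagStep Z F C'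

theorem not_cnFinal (C : CNConf) (F : CNFlag) : ¬ CNFinal C F := id

theorem CKStep.toCN {C D : CKConf} (h : CKStep C D) (n : ℕ) : CNTau (C.toCN n) (D.toCN n) := by
  cases h with
  | switch hv => exact .switch hv
  | _ => constructor

theorem CNTau.exists_of_toCN {C : CKConf} {n : ℕ} {Z : CNConf} (h : CNTau (C.toCN n) Z) :
    ∃ D, CKStep C D ∧ Z = D.toCN n := by
  cases C with
  | ev t π =>
    cases h with
    | fn => exact ⟨_, .fn, rfl⟩
    | switch hv => exact ⟨.cont _ _, .switch hv, rfl⟩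
  | cont π v =>
    cases h with
    | arg => exact ⟨.ev _ _, .arg, rfl⟩
    | beta => exact ⟨.ev _ _, .beta, rfl⟩

theorem CKSteps.toCN {C D : CKConf} (h : CKSteps C D) (n : ℕ) :
    Relation.ReflTransGen CNTau (C.toCN n) (D.toCN n) := by
  induction h with
  | refl => exact .refl
  | tail _ hstep ih => exact ih.tail (hstep.toCN n)

theorem exists_ckSteps_of_cnTaus_toCN {C : CKConf} {n : ℕ} {Z : CNConf}
    (h : Relation.ReflTransGen CNTau (C.toCN n) Z) : ∃ D, CKSteps C D ∧ Z = D.toCN n := by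
  induction h with
  | refl => exact ⟨C, .refl, rfl⟩
  | tail _ hstep ih =>
    obtain ⟨D, hCD, rfl⟩ := ih
    obtain ⟨E, hDE, rfl⟩ := hstep.exists_of_toCN
    exact ⟨E, hCD.tail hDE, rfl⟩

theorem CNWeakFlagStep.exists_ckSteps {C : CKConf} {n : ℕ} {F : CNFlag} {X : CNConf}
    (h : CNWeakFlagStep (C.toCN n) F X) : ∃ D, CKSteps C D ∧ CNFlagStep (D.toCN n) F X := by
  obtain ⟨Z, hZ, hF⟩ := h
  obtain ⟨D, hCD, rfl⟩ := exists_ckSteps_of_cnTaus_toCN hZ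
  exact ⟨D, hCD, hF⟩

theorem CNFlagStep.toCN_cases {D : CKConf} {n : ℕ} {F : CNFlag} {X : CNConf}
    (h : CNFlagStep (D.toCN n) F X) :
    (∃ v, D = .cont [] v ∧ F = .flam ∧ X = .cont [.funI v] (.fvar n) (n + 1)) ∨
    (∃ g π v, D = .cont (.funI (.fvar g) :: π) v ∧ F = .fvarF g ∧ X = .stuck π v n) := by
  cases D with
  | ev t π => cases h
  | cont π v =>
    cases h with
    | val => exact .inl ⟨v, rfl, rfl, rfl⟩
    | stuckFlag => exact .inr ⟨_, _, v, rfl, rfl, rfl⟩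

theorem CNWeakFlagStep.stuck_cases {π : CStack} {v : CTm} {n : ℕ} {F : CNFlag} {X : CNConf}
    (h : CNWeakFlagStep (.stuck π v n) F X) :
    (F = .fval ∧ X = .cont [.funI v] (.fvar n) (n + 1)) ∨
    (F = .fctx ∧ X = .cont π (.fvar n) (n + 1)) := by
  obtain ⟨Z, hZ, hF⟩ := h
  rcases hZ.cases_head with rfl | ⟨_, htau, _⟩
  · cases hF with
    | stuckVal => exact .inl ⟨rfl, rfl⟩
    | stuckCtx => exact .inr ⟨rfl, rfl⟩
  · cases htau

namespace CNConf

def counter : CNConf → ℕ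
  | ev _ _ n => n
  | cont _ _ n => n
  | stuck _ _ n => n

/-- The counter is renamed as well, since it names the next fresh variable. -/
def rename (ρ : ℕ → ℕ) : CNConf → CNConf
  | ev t π n => ev (t.rename ρ) (π.map (CItem.rename ρ)) (ρ n)
  | cont π v n => cont (π.map (CItem.rename ρ)) (v.rename ρ) (ρ n)
  | stuck π v n => stuck (π.map (CItem.rename ρ)) (v.rename ρ) (ρ n)

end CNConf

def CNFlag.rename (ρ : ℕ → ℕ) : CNFlag → CNFlag
  | fvarF g => fvarF (ρ g)
  | F => F

def CNLabel.rename (ρ : ℕ → ℕ) : CNLabel → CNLabel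
  | tau => tau
  | flag F => flag (F.rename ρ)

theorem CNStep.counter_le {X Y : CNConf} {l : CNLabel} (h : CNStep X l Y) :
    X.counter ≤ Y.counter := by
  cases h <;> simp [CNConf.counter]

theorem counter_le_of_cnTaus {X Z : CNConf} (h : Relation.ReflTransGen CNTau X Z) :
    X.counter ≤ Z.counter := by
  have h' : Relation.ReflTransGen (· ≤ ·) X.counter Z.counter :=
    h.lift _ fun _ _ h => CNStep.counter_le h
  rwa [Relation.reflTransGen_eq_self] at h'

theorem CNWeakFlagStep.counter_le {X Y : CNConf} {F : CNFlag} (h : CNWeakFlagStep X F Y) :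
    X.counter ≤ Y.counter :=
  let ⟨_, hZ, hF⟩ := h
  (counter_le_of_cnTaus hZ).trans (CNStep.counter_le hF)

section Rename

variable {ρ : ℕ → ℕ} {b : ℕ}

theorem CNStep.rename (hρ : ∀ k, b ≤ k → ρ (k + 1) = ρ k + 1) {X Y : CNConf} {l : CNLabel}
    (h : CNStep X l Y) (hb : b ≤ X.counter) :
    CNStep (X.rename ρ) (l.rename ρ) (Y.rename ρ) := by
  cases h with
  | switch hv => exact .switch (hv.rename ρ)
  | beta => simpa [CNConf.rename, CItem.rename, CTm.rename, CTm.rename_substC] using .beta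
  | val | stuckVal | stuckCtx =>
    simp only [CNConf.rename, CNConf.counter, List.map, CItem.rename, CTm.rename] at hb ⊢
    rw [hρ _ hb]
    constructor
  | _ => constructor

theorem CNStep.exists_of_rename (hρ : ∀ k, b ≤ k → ρ (k + 1) = ρ k + 1) {X Y' : CNConf}
    {l' : CNLabel} (h : CNStep (X.rename ρ) l' Y') (hb : b ≤ X.counter) :
    ∃ l Y, CNStep X l Y ∧ l' = l.rename ρ ∧ Y' = Y.rename ρ := by
  rcases X with ⟨u, σ, k⟩ | ⟨σ, w, k⟩ | ⟨σ, w, k⟩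
  · cases u with
    | app t s =>
      cases h with
      | fn => exact ⟨_, _, .fn, rfl, rfl⟩
      | switch hv => exact hv.elim
    | _ =>
      cases h
      exact ⟨_, .cont σ _ k, .switch trivial, rfl, rfl⟩
  · rcases σ with _ | ⟨_ | w₀, σ⟩
    · cases h
      refine ⟨_, _, .val, rfl, ?_⟩
      simp [CNConf.rename, CItem.rename, CTm.rename, hρ k hb]
    · cases h
      exact ⟨_, .ev _ (.funI w :: σ) k, .arg, rfl, rfl⟩
    · cases w₀ <;> cases h
      · exact ⟨_, .stuck σ w k, .stuckFlag, rfl, rfl⟩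
      · refine ⟨_, _, .beta, rfl, ?_⟩
        simp [CNConf.rename, CTm.rename_substC]
  · cases h
    · refine ⟨_, _, .stuckVal, rfl, ?_⟩
      simp [CNConf.rename, CItem.rename, CTm.rename, hρ k hb]
    · refine ⟨_, _, .stuckCtx, rfl, ?_⟩
      simp [CNConf.rename, CTm.rename, hρ k hb]

theorem cnTaus_rename (hρ : ∀ k, b ≤ k → ρ (k + 1) = ρ k + 1) {X Z : CNConf}
    (h : Relation.ReflTransGen CNTau X Z) (hb : b ≤ X.counter) :
    Relation.ReflTransGen CNTau (X.rename ρ) (Z.rename ρ) := by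
  induction h with
  | refl => exact .refl
  | tail hXZ hstep ih =>
    exact ih.tail (CNStep.rename hρ hstep (hb.trans (counter_le_of_cnTaus hXZ)))

theorem exists_cnTaus_of_rename (hρ : ∀ k, b ≤ k → ρ (k + 1) = ρ k + 1) {X Z' : CNConf}
    (h : Relation.ReflTransGen CNTau (X.rename ρ) Z') (hb : b ≤ X.counter) :
    ∃ Z, Relation.ReflTransGen CNTau X Z ∧ Z' = Z.rename ρ := by
  induction h with
  | refl => exact ⟨X, .refl, rfl⟩
  | tail _ hstep ih =>
    obtain ⟨Z, hXZ, rfl⟩ := ih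
    obtain ⟨l, Y, hZY, hl, rfl⟩ :=
      CNStep.exists_of_rename hρ hstep (hb.trans (counter_le_of_cnTaus hXZ))
    cases l with
    | tau => exact ⟨Y, hXZ.tail hZY, rfl⟩
    | flag F => cases hl

theorem CNWeakFlagStep.rename (hρ : ∀ k, b ≤ k → ρ (k + 1) = ρ k + 1) {X Y : CNConf}
    {F : CNFlag} (h : CNWeakFlagStep X F Y) (hb : b ≤ X.counter) :
    CNWeakFlagStep (X.rename ρ) (F.rename ρ) (Y.rename ρ) :=
  let ⟨Z, hZ, hF⟩ := h
  ⟨Z.rename ρ, cnTaus_rename hρ hZ hb,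
    CNStep.rename hρ hF (hb.trans (counter_le_of_cnTaus hZ))⟩

theorem CNWeakFlagStep.exists_of_rename (hρ : ∀ k, b ≤ k → ρ (k + 1) = ρ k + 1)
    {X Y' : CNConf} {F' : CNFlag} (h : CNWeakFlagStep (X.rename ρ) F' Y') (hb : b ≤ X.counter) :
    ∃ F Y, CNWeakFlagStep X F Y ∧ F' = F.rename ρ ∧ Y' = Y.rename ρ := by
  obtain ⟨Z', hZ', hF'⟩ := h
  obtain ⟨Z, hXZ, rfl⟩ := exists_cnTaus_of_rename hρ hZ' hb
  obtain ⟨l, Y, hZY, hl, rfl⟩ :=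
    CNStep.exists_of_rename hρ hF' (hb.trans (counter_le_of_cnTaus hXZ))
  cases l with
  | tau => cases hl
  | flag F =>
    cases hl
    exact ⟨F, Y, ⟨Z, hXZ, hZY⟩, rfl, rfl⟩

theorem MachineBisim.rename (hρ : ∀ k, b ≤ k → ρ (k + 1) = ρ k + 1) {X Y : CNConf}
    (h : MachineBisim CNTau CNFlagStep CNFinal X Y) (hX : b ≤ X.counter) (hY : b ≤ Y.counter) :
    MachineBisim CNTau CNFlagStep CNFinal (X.rename ρ) (Y.rename ρ) := by
  refine ⟨fun X' Y' => ∃ X Y, MachineBisim CNTau CNFlagStep CNFinal X Y ∧ b ≤ X.counter ∧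
    b ≤ Y.counter ∧ X' = X.rename ρ ∧ Y' = Y.rename ρ, ?_, X, Y, h, hX, hY, rfl, rfl⟩
  refine isMachineBisim_of_flag_step not_cnFinal ?_ ?_
  · rintro _ _ ⟨X, Y, hXY, hX, hY, rfl, rfl⟩
    exact ⟨Y, X, isMachineBisim_machineBisim.1 hXY, hY, hX, rfl, rfl⟩
  · rintro _ _ ⟨X, Y, hXY, hX, hY, rfl, rfl⟩ _ _ hX'
    obtain ⟨F, X₁, hX₁, rfl, rfl⟩ := CNWeakFlagStep.exists_of_rename hρ hX' hX
    obtain ⟨Y₁, hY₁, hXY₁⟩ := (isMachineBisim_machineBisim.2 X Y hXY).1 F X₁ hX₁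
    exact ⟨Y₁.rename ρ, CNWeakFlagStep.rename hρ hY₁ hY, X₁, Y₁, hXY₁,
      hX.trans (CNWeakFlagStep.counter_le hX₁), hY.trans (CNWeakFlagStep.counter_le hY₁),
      rfl, rfl⟩

end Rename

/-- The names below `n` are those of the configuration and stay fixed; the names above `n` are
moved beyond `f`, so that the new counter `n + f + 2` is fresh for `f` as well. -/
def freshRename (n f x : ℕ) : ℕ :=
  if x < n then x else if x = n then f else x + f + 1

theorem freshRename_succ (n f k : ℕ) (hk : n + 1 ≤ k) :
    freshRename n f (k + 1) = freshRename n f k + 1 := by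
  unfold freshRename
  split_ifs <;> omega

theorem rename_freshRename_cont_fvar {π : CStack} {n : ℕ} (f : ℕ) (hπ : fvSt π ⊆ range n) :
    (CNConf.cont π (.fvar n) (n + 1)).rename (freshRename n f) =
      .cont π (.fvar f) (n + f + 2) := by
  have hfix : ∀ x ∈ fvSt π, freshRename n f x = x := fun x hx =>
    if_pos (mem_range.1 (hπ hx))
  simp only [CNConf.rename, CTm.rename, renameStack_eq_self hfix, freshRename, lt_irrefl,
    if_false, if_true, show ¬ n + 1 < n by omega, show n + 1 ≠ n by omega]
  congr 1
  omega

def MachineNFRel (C C' : CKConf) : Prop :=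
  ∃ n, C.fv ⊆ range n ∧ C'.fv ⊆ range n ∧
    MachineBisim CNTau CNFlagStep CNFinal (C.toCN n) (C'.toCN n)

theorem machineNFRel_cont_fvar {π π' : CStack} {n : ℕ} (hπ : fvSt π ⊆ range n)
    (hπ' : fvSt π' ⊆ range n)
    (h : MachineBisim CNTau CNFlagStep CNFinal (.cont π (.fvar n) (n + 1))
      (.cont π' (.fvar n) (n + 1))) (f : ℕ) :
    MachineNFRel (.cont π (.fvar f)) (.cont π' (.fvar f)) := by
  have hbound : ∀ {σ : CStack}, fvSt σ ⊆ range n →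
      (CKConf.cont σ (.fvar f)).fv ⊆ range (n + f + 2) := fun hσ =>
    fv_cont_fvar_subset_range (hσ.trans (range_subset_range.2 (by omega))) (by omega)
  have h' := h.rename (freshRename_succ n f) le_rfl le_rfl
  rw [rename_freshRename_cont_fvar f hπ, rename_freshRename_cont_fvar f hπ'] at h'
  exact ⟨n + f + 2, hbound hπ, hbound hπ', h'⟩

theorem MachineBisim.of_stuck {π π' : CStack} {v v' : CTm} {n : ℕ}
    (h : MachineBisim CNTau CNFlagStep CNFinal (.stuck π v n) (.stuck π' v' n)) :
    MachineBisim CNTau CNFlagStep CNFinal (.cont [.funI v] (.fvar n) (n + 1))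
        (.cont [.funI v'] (.fvar n) (n + 1)) ∧
      MachineBisim CNTau CNFlagStep CNFinal (.cont π (.fvar n) (n + 1))
        (.cont π' (.fvar n) (n + 1)) := by
  have hstep := (isMachineBisim_machineBisim.2 _ _ h).1
  obtain ⟨X, hX, hval⟩ := hstep .fval _ ⟨_, .refl, .stuckVal⟩
  obtain ⟨Y, hY, hctx⟩ := hstep .fctx _ ⟨_, .refl, .stuckCtx⟩
  rcases CNWeakFlagStep.stuck_cases hX with ⟨-, rfl⟩ | ⟨h, -⟩
  · rcases CNWeakFlagStep.stuck_cases hY with ⟨h, -⟩ | ⟨-, rfl⟩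
    · cases h
    · exact ⟨hval, hctx⟩
  · cases h

theorem isNFBisimV_machineNFRel : IsNFBisimV MachineNFRel := by
  refine ⟨fun _ _ ⟨n, hC, hC', h⟩ => ⟨n, hC', hC, isMachineBisim_machineBisim.1 h⟩, ?_⟩
  rintro C C' ⟨n, hC, hC', h⟩
  have hstep := (isMachineBisim_machineBisim.2 _ _ h).1
  refine ⟨fun v hv => ?_, fun g π v hv => ?_⟩
  · obtain ⟨X, hX, hbisim⟩ := hstep .flam _ ⟨_, hv.toCN n, .val⟩
    obtain ⟨D', hD', hflag⟩ := CNWeakFlagStep.exists_ckSteps hX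
    rcases hflag.toCN_cases with ⟨v', rfl, -, rfl⟩ | ⟨_, _, _, -, h, -⟩
    · have hvn := hv.fv_subset.trans hC
      have hv'n := hD'.fv_subset.trans hC'
      simp only [CKConf.fv, fvSt, union_empty] at hvn hv'n
      rw [← fvSt_singleton_funI] at hvn hv'n
      exact ⟨v', hD', fun f _ => machineNFRel_cont_fvar hvn hv'n hbisim f⟩
    · cases h
  · obtain ⟨X, hX, hbisim⟩ := hstep (.fvarF g) _ ⟨_, hv.toCN n, .stuckFlag⟩
    obtain ⟨D', hD', hflag⟩ := CNWeakFlagStep.exists_ckSteps hX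
    rcases hflag.toCN_cases with ⟨_, -, h, -⟩ | ⟨g', π', v', rfl, h, rfl⟩
    · cases h
    cases h
    have hvn := hv.fv_subset.trans hC
    have hv'n := hD'.fv_subset.trans hC'
    simp only [CKConf.fv, fvSt, fvItem, union_subset_iff] at hvn hv'n
    obtain ⟨hval, hctx⟩ := hbisim.of_stuck
    refine ⟨π', v', hD', fun f _ => ⟨?_, machineNFRel_cont_fvar hvn.2.2 hv'n.2.2 hctx f⟩⟩
    rw [← fvSt_singleton_funI] at hvn hv'n
    exact machineNFRel_cont_fvar hvn.1 hv'n.1 hval f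

/-- A `stuck` pair only needs the observations at the variable `n` that the machine is about to
generate. -/
inductive NFMachineRel : CNConf → CNConf → Prop
  | embed {C C' : CKConf} {n : ℕ} : NFBisimV C C' → C.fv ⊆ range n → C'.fv ⊆ range n →
      NFMachineRel (C.toCN n) (C'.toCN n)
  | stuck {π π' : CStack} {v v' : CTm} {n : ℕ} :
      (CKConf.cont π v).fv ⊆ range n → (CKConf.cont π' v').fv ⊆ range n →
      NFBisimV (.cont [.funI v] (.fvar n)) (.cont [.funI v'] (.fvar n)) →
      NFBisimV (.cont π (.fvar n)) (.cont π' (.fvar n)) →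
      NFMachineRel (.stuck π v n) (.stuck π' v' n)

theorem NFMachineRel.symm {X Y : CNConf} (h : NFMachineRel X Y) : NFMachineRel Y X := by
  cases h with
  | embed h hC hC' => exact .embed (isNFBisimV_nfBisimV.1 h) hC' hC
  | stuck hb hb' hval hctx =>
    exact .stuck hb' hb (isNFBisimV_nfBisimV.1 hval) (isNFBisimV_nfBisimV.1 hctx)

theorem NFMachineRel.embed_step {C C' : CKConf} {n : ℕ} (h : NFBisimV C C')
    (hC : C.fv ⊆ range n) (hC' : C'.fv ⊆ range n) {F : CNFlag} {X : CNConf}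
    (hX : CNWeakFlagStep (C.toCN n) F X) :
    ∃ Y, CNWeakFlagStep (C'.toCN n) F Y ∧ NFMachineRel X Y := by
  obtain ⟨D, hD, hflag⟩ := CNWeakFlagStep.exists_ckSteps hX
  have hDn := hD.fv_subset.trans hC
  obtain ⟨hval, hstuck⟩ := isNFBisimV_nfBisimV.2 C C' h
  rcases hflag.toCN_cases with ⟨v, rfl, rfl, rfl⟩ | ⟨g, π, v, rfl, rfl, rfl⟩
  · obtain ⟨v', hD', hvv'⟩ := hval v hD
    have hD'n := hD'.fv_subset.trans hC'
    simp only [CKConf.fv, fvSt, union_empty] at hDn hD'n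
    have hfresh : n ∉ fvC v ∪ fvC v' := fun hn => notMem_range_self (union_subset hDn hD'n hn)
    rw [← fvSt_singleton_funI] at hDn hD'n
    exact ⟨_, ⟨_, hD'.toCN n, .val⟩, .embed (hvv' n hfresh)
      (fv_cont_fvar_subset_range_succ hDn) (fv_cont_fvar_subset_range_succ hD'n)⟩
  · obtain ⟨π', v', hD', hvv'⟩ := hstuck g π v hD
    have hD'n := hD'.fv_subset.trans hC'
    simp only [CKConf.fv, fvSt, fvItem, union_subset_iff] at hDn hD'n
    have hfresh : n ∉ fvC v ∪ fvC v' ∪ fvSt π ∪ fvSt π' := fun hn =>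
      notMem_range_self ((show _ ⊆ range n by simp only [union_subset_iff]; tauto) hn)
    exact ⟨_, ⟨_, hD'.toCN n, .stuckFlag⟩, .stuck (union_subset hDn.1 hDn.2.2)
      (union_subset hD'n.1 hD'n.2.2) (hvv' n hfresh).1 (hvv' n hfresh).2⟩

theorem NFMachineRel.stuck_step {π π' : CStack} {v v' : CTm} {n : ℕ}
    (hb : (CKConf.cont π v).fv ⊆ range n) (hb' : (CKConf.cont π' v').fv ⊆ range n)
    (hval : NFBisimV (.cont [.funI v] (.fvar n)) (.cont [.funI v'] (.fvar n)))
    (hctx : NFBisimV (.cont π (.fvar n)) (.cont π' (.fvar n))) {F : CNFlag} {X : CNConf}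
    (hX : CNWeakFlagStep (.stuck π v n) F X) :
    ∃ Y, CNWeakFlagStep (.stuck π' v' n) F Y ∧ NFMachineRel X Y := by
  simp only [CKConf.fv, union_subset_iff] at hb hb'
  rcases CNWeakFlagStep.stuck_cases hX with ⟨rfl, rfl⟩ | ⟨rfl, rfl⟩
  · rw [← fvSt_singleton_funI] at hb hb'
    exact ⟨_, ⟨_, .refl, .stuckVal⟩, .embed hval (fv_cont_fvar_subset_range_succ hb.1)
      (fv_cont_fvar_subset_range_succ hb'.1)⟩
  · exact ⟨_, ⟨_, .refl, .stuckCtx⟩, .embed hctx (fv_cont_fvar_subset_range_succ hb.2)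
      (fv_cont_fvar_subset_range_succ hb'.2)⟩

theorem isMachineBisim_nfMachineRel : IsMachineBisim CNTau CNFlagStep CNFinal NFMachineRel := by
  refine isMachineBisim_of_flag_step not_cnFinal (fun _ _ h => h.symm) ?_
  intro X Y h F X' hX'
  cases h with
  | embed h hC hC' => exact NFMachineRel.embed_step h hC hC' hX'
  | stuck hb hb' hval hctx => exact NFMachineRel.stuck_step hb hb' hval hctx hX'

theorem NFBisimV.machineBisim_toCN {C C' : CKConf} {n : ℕ} (h : NFBisimV C C')
    (hC : C.fv ⊆ range n) (hC' : C'.fv ⊆ range n) :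
    MachineBisim CNTau CNFlagStep CNFinal (C.toCN n) (C'.toCN n) :=
  ⟨NFMachineRel, isMachineBisim_nfMachineRel, .embed h hC hC'⟩

theorem NFBisimV.of_machineBisim_toCN {C C' : CKConf} {n : ℕ} (hC : C.fv ⊆ range n)
    (hC' : C'.fv ⊆ range n) (h : MachineBisim CNTau CNFlagStep CNFinal (C.toCN n) (C'.toCN n)) :
    NFBisimV C C' :=
  ⟨MachineNFRel, isNFBisimV_machineNFRel, n, hC, hC', h⟩

theorem fvC_union_lt_iff (t s : CTm) (n : ℕ) :
    (∀ f ∈ fvC t ∪ fvC s, f < n) ↔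
      (CKConf.ev t []).fv ⊆ range n ∧ (CKConf.ev s []).fv ⊆ range n := by
  simp [CKConf.fv, fvSt, subset_iff, or_imp, forall_and]

/-- `t ~nf s` iff there exists `n` greater than every free variable of `t` and
`s` such that `<t | [] | n>_ev ~m <s | [] | n>_ev`. -/
theorem cbv_nf_bisim_iff_machine_bisim (t s : CTm) :
    NFBisimV (.ev t []) (.ev s []) ↔
      ∃ n : ℕ, (∀ f ∈ fvC t ∪ fvC s, f < n) ∧
        MachineBisim CNTau CNFlagStep CNFinal (.ev t [] n) (.ev s [] n) := by
  constructor
  · intro h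
    obtain ⟨n, hn⟩ := (fvC t ∪ fvC s).exists_nat_subset_range
    have hbound : ∀ f ∈ fvC t ∪ fvC s, f < n := fun f hf => mem_range.1 (hn hf)
    obtain ⟨ht, hs⟩ := (fvC_union_lt_iff t s n).1 hbound
    exact ⟨n, hbound, h.machineBisim_toCN ht hs⟩
  · rintro ⟨n, hn, h⟩
    obtain ⟨ht, hs⟩ := (fvC_union_lt_iff t s n).1 hn
    exact NFBisimV.of_machineBisim_toCN ht hs h
end
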